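/- arXiv:1011.5318 — 2 statements merged into one kernel-verified Lean document; each statement's English description precedes it below -/
import Mathlib

section
/- For all 0 < α < β and every ε > 0 there exists K such that for all k ≥ K and all complex w with α ≤ |w| ≤ β, (1−ε)·|w|^{k−1} ∏_{j=1}^{k−1}(1 + r_k/r_j) ≤ |∏_{j=1}^{k−1}(1 − w a_k/a_j)| ≤ (1+ε)·|w|^{k−1} ∏_{j=1}^{k−1}(1 + r_k/r_j). -/
open Filter Finset

/-!
Write `x_j = r_k / r_j`. Since `‖1 - w a_k / a_j‖` differs from `‖w‖ x_j` by at most `1`, each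
factor equals `‖w‖ (1 + x_j)` up to a relative error `c / x_j = c r_j / r_k`, where
`c = 1 + 1 / α`. Hence the product equals `‖w‖^(k-1) ∏ (1 + x_j)` up to a factor between
`1 - c ∑_{j<k} r_j / r_k` and `exp (c ∑_{j<k} r_j / r_k)`, and it suffices that
`∑_{j<k} r_j = o(r_k)`. This follows from `r_{k+1} / r_k → ∞`: the recursion gives
`r_{k+1} / r_k ≥ P_k r_k / (r_1 r_2)`, and `P_k r_k → ∞` because `P_k ≥ (3/4)^k` eventually
while the doubling condition gives `r_k ≥ A 2^k`.
-/

theorem one_sub_sum_le_prod_one_sub {ι : Type*} (s : Finset ι) {f : ι → ℝ}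
    (h0 : ∀ i ∈ s, 0 ≤ f i) (h1 : ∀ i ∈ s, f i ≤ 1) :
    1 - ∑ i ∈ s, f i ≤ ∏ i ∈ s, (1 - f i) := by
  classical
  induction s using Finset.induction_on with
  | empty => simp
  | insert i s hi ih =>
    rw [forall_mem_insert] at h0 h1
    have hsum : 0 ≤ ∑ j ∈ s, f j := sum_nonneg h0.2
    rw [prod_insert hi, sum_insert hi]
    calc 1 - (f i + ∑ j ∈ s, f j) ≤ (1 - f i) * (1 - ∑ j ∈ s, f j) := by
          nlinarith [mul_nonneg h0.1 hsum]
      _ ≤ (1 - f i) * ∏ j ∈ s, (1 - f j) :=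
          mul_le_mul_of_nonneg_left (ih h0.2 h1.2) (sub_nonneg.2 h1.1)

theorem one_sub_sum_mul_prod_le_prod {ι : Type*} (s : Finset ι) {a b e : ι → ℝ}
    (ha : ∀ i ∈ s, 0 ≤ a i) (hb : ∀ i ∈ s, 0 ≤ b i) (he : ∀ i ∈ s, 0 ≤ e i)
    (h : ∀ i ∈ s, (1 - e i) * a i ≤ b i) :
    (1 - ∑ i ∈ s, e i) * ∏ i ∈ s, a i ≤ ∏ i ∈ s, b i := by
  by_cases he1 : ∀ i ∈ s, e i ≤ 1
  · calc (1 - ∑ i ∈ s, e i) * ∏ i ∈ s, a i ≤ (∏ i ∈ s, (1 - e i)) * ∏ i ∈ s, a i :=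
          mul_le_mul_of_nonneg_right (one_sub_sum_le_prod_one_sub s he he1) (prod_nonneg ha)
      _ = ∏ i ∈ s, (1 - e i) * a i := prod_mul_distrib.symm
      _ ≤ ∏ i ∈ s, b i :=
          prod_le_prod (fun i hi => mul_nonneg (sub_nonneg.2 (he1 i hi)) (ha i hi)) h
  · push Not at he1
    obtain ⟨i, hi, hei⟩ := he1
    have hsum : 1 - ∑ i ∈ s, e i ≤ 0 := by linarith [single_le_sum he hi]
    exact (mul_nonpos_of_nonpos_of_nonneg hsum (prod_nonneg ha)).trans (prod_nonneg hb)

theorem prod_le_exp_sum_mul_prod {ι : Type*} (s : Finset ι) {a b e : ι → ℝ}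
    (ha : ∀ i ∈ s, 0 ≤ a i) (hb : ∀ i ∈ s, 0 ≤ b i) (h : ∀ i ∈ s, b i ≤ (1 + e i) * a i) :
    ∏ i ∈ s, b i ≤ Real.exp (∑ i ∈ s, e i) * ∏ i ∈ s, a i := by
  rw [Real.exp_sum, ← prod_mul_distrib]
  refine prod_le_prod hb fun i hi => (h i hi).trans ?_
  gcongr
  · exact ha i hi
  · linarith [Real.add_one_le_exp (e i)]

theorem abs_sub_mul_one_add_le {y W x c : ℝ} (hW : 0 < W) (hx : 0 < x) (hc : W + 1 ≤ W * c)
    (hy : |y - W * x| ≤ 1) : |y - W * (1 + x)| ≤ c / x * (W * (1 + x)) := by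
  have hc0 : 0 < c := pos_of_mul_pos_right (by linarith) hW.le
  have hWc : 0 ≤ W * c / x := by positivity
  have hexpand : c / x * (W * (1 + x)) = W * c / x + W * c := by field_simp
  rw [hexpand, abs_le]
  rw [abs_le] at hy
  constructor <;> linarith

theorem norm_prod_one_sub_bounds {R ι : Type*} [SeminormedCommRing R] [NormMulClass R]
    [NormOneClass R] (s : Finset ι) {z : ι → R} {x : ι → ℝ} {W c : ℝ} (hW : 0 < W)
    (hc : W + 1 ≤ W * c) (hx : ∀ i ∈ s, 0 < x i) (hz : ∀ i ∈ s, ‖z i‖ = W * x i) :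
    (1 - ∑ i ∈ s, c / x i) * ∏ i ∈ s, W * (1 + x i) ≤ ‖∏ i ∈ s, (1 - z i)‖ ∧
      ‖∏ i ∈ s, (1 - z i)‖ ≤ Real.exp (∑ i ∈ s, c / x i) * ∏ i ∈ s, W * (1 + x i) := by
  have hfactor : ∀ i ∈ s, |‖1 - z i‖ - W * (1 + x i)| ≤ c / x i * (W * (1 + x i)) := by
    intro i hi
    refine abs_sub_mul_one_add_le hW (hx i hi) hc ?_
    simpa [hz i hi] using abs_norm_sub_norm_le (1 - z i) (-z i)
  have ha : ∀ i ∈ s, 0 ≤ W * (1 + x i) := fun i hi => by have := hx i hi; positivity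
  have hb : ∀ i ∈ s, 0 ≤ ‖1 - z i‖ := fun _ _ => norm_nonneg _
  have hc0 : 0 < c := pos_of_mul_pos_right (by linarith) hW.le
  rw [norm_prod]
  exact ⟨one_sub_sum_mul_prod_le_prod s ha hb (fun i hi => (div_pos hc0 (hx i hi)).le)
      (fun i hi => by linarith [(abs_le.1 (hfactor i hi)).1]),
    prod_le_exp_sum_mul_prod s ha hb (fun i hi => by linarith [(abs_le.1 (hfactor i hi)).2])⟩

theorem pow_sub_mul_le {r : ℕ → ℝ} {c : ℝ} {K k : ℕ} (hc : 0 ≤ c)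
    (h : ∀ j, K ≤ j → c * r j ≤ r (j + 1)) (hKk : K ≤ k) : c ^ (k - K) * r K ≤ r k := by
  obtain ⟨n, rfl⟩ := exists_add_of_le hKk
  simpa using geom_le (u := fun i => r (K + i)) hc n fun i _ => h (K + i) (by omega)

theorem exists_pos_mul_pow_le {r : ℕ → ℝ} {c : ℝ} (hc : 0 < c) (hpos : ∀ᶠ k in atTop, 0 < r k)
    (h : ∀ᶠ k in atTop, c * r k ≤ r (k + 1)) : ∃ A > 0, ∀ᶠ k in atTop, A * c ^ k ≤ r k := by
  obtain ⟨K, hK⟩ := eventually_atTop.1 (hpos.and h)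
  refine ⟨r K / c ^ K, div_pos (hK K le_rfl).1 (pow_pos hc K), ?_⟩
  filter_upwards [eventually_ge_atTop K] with k hk
  calc r K / c ^ K * c ^ k = c ^ (k - K) * r K := by
        rw [← pow_sub_mul_pow c hk]; field_simp
    _ ≤ r k := pow_sub_mul_le hc.le (fun j hj => (hK j hj).2) hk

theorem tendsto_atTop_of_eventually_mul_le {r : ℕ → ℝ} {c : ℝ} (hc : 1 < c)
    (hpos : ∀ᶠ k in atTop, 0 < r k) (h : ∀ᶠ k in atTop, c * r k ≤ r (k + 1)) :
    Tendsto r atTop atTop := by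
  obtain ⟨A, hA, hAr⟩ := exists_pos_mul_pow_le (by linarith) hpos h
  exact tendsto_atTop_mono' _ hAr ((tendsto_pow_atTop_atTop_of_one_lt hc).const_mul_atTop hA)

theorem mul_sum_Ico_le_sub {r : ℕ → ℝ} {c : ℝ} {K k : ℕ}
    (h : ∀ j, K ≤ j → (1 + c) * r j ≤ r (j + 1)) (hKk : K ≤ k) :
    c * ∑ j ∈ Ico K k, r j ≤ r k - r K := by
  rw [← sum_Ico_sub r hKk, mul_sum]
  exact sum_le_sum fun j hj => by linarith [h j (mem_Ico.1 hj).1]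

theorem eventually_sum_Ico_le_mul {r : ℕ → ℝ} (hpos : ∀ k, 1 ≤ k → 0 < r k)
    (hratio : Tendsto (fun k => r (k + 1) / r k) atTop atTop) {δ : ℝ} (hδ : 0 < δ) :
    ∀ᶠ k in atTop, ∑ j ∈ Ico 1 k, r j ≤ δ * r k := by
  have hpos' : ∀ᶠ k in atTop, 0 < r k := eventually_atTop.2 ⟨1, hpos⟩
  have hmul : ∀ M : ℝ, ∀ᶠ k in atTop, M * r k ≤ r (k + 1) := fun M => by
    filter_upwards [hratio.eventually_ge_atTop M, hpos'] with k hk hrk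
    rwa [le_div_iff₀ hrk] at hk
  have hr : Tendsto r atTop atTop := tendsto_atTop_of_eventually_mul_le one_lt_two hpos' (hmul 2)
  obtain ⟨K, hK⟩ := eventually_atTop.1 ((hmul (1 + 2 / δ)).and (eventually_ge_atTop 1))
  filter_upwards [eventually_ge_atTop K, hr.eventually_ge_atTop (2 / δ * ∑ j ∈ Ico 1 K, r j)]
    with k hk hrk
  have hK1 := (hK K le_rfl).2
  have htail := mul_sum_Ico_le_sub (fun j hj => (hK j hj).1) hk
  have hrK := hpos K hK1
  rw [← sum_Ico_consecutive r hK1 hk]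
  calc ∑ j ∈ Ico 1 K, r j + ∑ j ∈ Ico K k, r j
      = δ / 2 * (2 / δ * ∑ j ∈ Ico 1 K, r j + 2 / δ * ∑ j ∈ Ico K k, r j) := by
        field_simp
    _ ≤ δ / 2 * (r k + r k) := by gcongr; linarith
    _ = δ * r k := by ring

theorem eventually_pow_le_of_tendsto_rpow_one_div {P : ℕ → ℝ} {q : ℝ} (hq0 : 0 ≤ q) (hq : q < 1)
    (hP : ∀ᶠ k in atTop, 0 ≤ P k) (hlim : Tendsto (fun k : ℕ => P k ^ ((1 : ℝ) / k)) atTop (nhds 1)) :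
    ∀ᶠ k in atTop, q ^ k ≤ P k := by
  filter_upwards [hlim.eventually (eventually_ge_nhds hq), hP, eventually_ge_atTop 1]
    with k hk hPk hk1
  calc q ^ k ≤ (P k ^ ((1 : ℝ) / k)) ^ k := pow_le_pow_left₀ hq0 hk k
    _ = P k := by rw [one_div, Real.rpow_inv_natCast_pow hPk (by omega)]

theorem tendsto_mul_atTop_of_two_mul_le {P r : ℕ → ℝ} (hP : ∀ᶠ k in atTop, 0 < P k)
    (hPlim : Tendsto (fun k : ℕ => P k ^ ((1 : ℝ) / k)) atTop (nhds 1))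
    (hrpos : ∀ᶠ k in atTop, 0 < r k) (hr2 : ∀ᶠ k in atTop, 2 * r k ≤ r (k + 1)) :
    Tendsto (fun k => P k * r k) atTop atTop := by
  obtain ⟨A, hA, hAr⟩ := exists_pos_mul_pow_le two_pos hrpos hr2
  refine tendsto_atTop_mono' _ ?_
    ((tendsto_pow_atTop_atTop_of_one_lt (by norm_num : (1 : ℝ) < 3 / 2)).const_mul_atTop hA)
  filter_upwards [hAr, hP, eventually_pow_le_of_tendsto_rpow_one_div (q := 3 / 4) (by norm_num)
    (by norm_num) (hP.mono fun k hk => hk.le) hPlim] with k hrk hPk0 hPk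
  calc A * (3 / 2 : ℝ) ^ k = (3 / 4) ^ k * (A * 2 ^ k) := by
        rw [mul_left_comm, ← mul_pow]; norm_num
    _ ≤ P k * r k := mul_le_mul hPk hrk (by positivity) hPk0.le

theorem tendsto_succ_div_atTop_of_rec {N : ℕ} {P r : ℕ → ℝ}
    (hP : ∀ k, 1 ≤ k → 0 < P k)
    (hPlim : Tendsto (fun k : ℕ => (P k) ^ ((1 : ℝ) / k)) atTop (nhds 1))
    (hrpos : ∀ k, 1 ≤ k → 0 < r k)
    (hr2 : ∀ᶠ k in atTop, 2 * r k ≤ r (k + 1))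
    (hrec : ∀ k, 1 ≤ k →
      r (k + 1) = P k * (r k) ^ N * ∏ j ∈ Finset.Icc 1 k, (1 + r k / r j)) :
    Tendsto (fun k => r (k + 1) / r k) atTop atTop := by
  have hrpos' : ∀ᶠ k in atTop, 0 < r k := eventually_atTop.2 ⟨1, hrpos⟩
  have hP' : ∀ᶠ k in atTop, 0 < P k := eventually_atTop.2 ⟨1, hP⟩
  have hr₁ := hrpos 1 le_rfl
  have hr₂ := hrpos 2 one_le_two
  refine tendsto_atTop_mono' _ ?_
    ((tendsto_mul_atTop_of_two_mul_le hP' hPlim hrpos' hr2).atTop_div_const (mul_pos hr₁ hr₂))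
  filter_upwards [eventually_ge_atTop 2, hP',
    (tendsto_atTop_of_eventually_mul_le one_lt_two hrpos' hr2).eventually_ge_atTop 1]
    with k hk hPk hrk
  have hrk0 : 0 < r k := by linarith
  have hsub : ({1, 2} : Finset ℕ) ⊆ Icc 1 k := by
    intro j
    simp only [mem_insert, mem_singleton, mem_Icc]
    omega
  have hone : ∀ j ∈ Icc 1 k, 1 ≤ 1 + r k / r j := fun j hj => by
    have := hrpos j (mem_Icc.1 hj).1
    simp only [le_add_iff_nonneg_right]
    positivity
  have hprod : r k / r 1 * (r k / r 2) ≤ ∏ j ∈ Icc 1 k, (1 + r k / r j) := by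
    calc r k / r 1 * (r k / r 2) ≤ (1 + r k / r 1) * (1 + r k / r 2) := by
          gcongr <;> linarith
      _ = ∏ j ∈ {1, 2}, (1 + r k / r j) := by rw [prod_pair (by norm_num)]
      _ ≤ ∏ j ∈ Icc 1 k, (1 + r k / r j) := prod_le_prod_of_subset_of_one_le hsub
          (fun j hj => zero_le_one.trans (hone j (hsub hj))) fun j hj _ => hone j hj
  rw [le_div_iff₀ hrk0, hrec k (by omega)]
  calc P k * r k / (r 1 * r 2) * r k = P k * (r k / r 1 * (r k / r 2)) := by ring
    _ ≤ P k * (r k ^ N * ∏ j ∈ Icc 1 k, (1 + r k / r j)) := by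
        refine mul_le_mul_of_nonneg_left ?_ hPk.le
        exact hprod.trans
          (le_mul_of_one_le_left ((by positivity : (0 : ℝ) ≤ _).trans hprod) (one_le_pow₀ hrk))
    _ = _ := by ring

theorem norm_prod_one_sub_mul_div_bounds {r : ℕ → ℝ} {a : ℕ → ℂ}
    (hrpos : ∀ k, 1 ≤ k → 0 < r k) (ha : ∀ k, 1 ≤ k → ‖a k‖ = r k) {k : ℕ} (hk : 1 ≤ k)
    {w : ℂ} {c : ℝ} (hw : 0 < ‖w‖) (hc : ‖w‖ + 1 ≤ ‖w‖ * c) :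
    (1 - c * (∑ j ∈ Ico 1 k, r j) / r k) * (‖w‖ ^ (k - 1) * ∏ j ∈ Ico 1 k, (1 + r k / r j)) ≤
        ‖∏ j ∈ Ico 1 k, (1 - w * a k / a j)‖ ∧
      ‖∏ j ∈ Ico 1 k, (1 - w * a k / a j)‖ ≤
        Real.exp (c * (∑ j ∈ Ico 1 k, r j) / r k) *
          (‖w‖ ^ (k - 1) * ∏ j ∈ Ico 1 k, (1 + r k / r j)) := by
  have hrk := hrpos k hk
  have hsum : ∑ j ∈ Ico 1 k, c / (r k / r j) = c * (∑ j ∈ Ico 1 k, r j) / r k := by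
    simp only [div_div_eq_mul_div]
    rw [← sum_div, ← mul_sum]
  have hprod : ∏ j ∈ Ico 1 k, ‖w‖ * (1 + r k / r j) =
      ‖w‖ ^ (k - 1) * ∏ j ∈ Ico 1 k, (1 + r k / r j) := by
    rw [prod_mul_distrib, prod_const, Nat.card_Ico]
  rw [← hsum, ← hprod]
  exact norm_prod_one_sub_bounds (Ico 1 k) hw hc
    (fun j hj => div_pos hrk (hrpos j (mem_Ico.1 hj).1)) fun j hj => by
      rw [norm_div, norm_mul, ha k hk, ha j (mem_Ico.1 hj).1, mul_div_assoc]

theorem stmt_1_general (N : ℕ)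
    (P r : ℕ → ℝ)
    (hP : ∀ k, 1 ≤ k → 0 < P k)
    (hPlim : Tendsto (fun k : ℕ => (P k) ^ ((1 : ℝ) / k)) atTop (nhds 1))
    (hrpos : ∀ k, 1 ≤ k → 0 < r k)
    (hr2 : ∀ᶠ k in atTop, 2 * r k ≤ r (k + 1))
    (hrec : ∀ k, 1 ≤ k →
      r (k + 1) = P k * (r k) ^ N * ∏ j ∈ Finset.Icc 1 k, (1 + r k / r j))
    (a : ℕ → ℂ) (ha : ∀ k, 1 ≤ k → ‖a k‖ = r k) :
    ∀ α β : ℝ, 0 < α → α < β → ∀ ε : ℝ, 0 < ε → ∃ K : ℕ, ∀ k, K ≤ k →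
      ∀ w : ℂ, α ≤ ‖w‖ → ‖w‖ ≤ β →
        (1 - ε) * ((‖w‖) ^ (k - 1) * ∏ j ∈ Finset.Icc 1 (k - 1), (1 + r k / r j)) ≤
            ‖∏ j ∈ Finset.Icc 1 (k - 1), (1 - w * a k / a j)‖ ∧
          ‖∏ j ∈ Finset.Icc 1 (k - 1), (1 - w * a k / a j)‖ ≤
            (1 + ε) * ((‖w‖) ^ (k - 1) * ∏ j ∈ Finset.Icc 1 (k - 1), (1 + r k / r j)) := by
  intro α β hα _ ε hε
  have hc : 0 < 1 + 1 / α := by positivity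
  have hε' : 0 < 1 + ε := by linarith
  obtain ⟨K, hK⟩ := eventually_atTop.1 ((eventually_sum_Ico_le_mul hrpos
    (tendsto_succ_div_atTop_of_rec hP hPlim hrpos hr2 hrec)
    (div_pos (Real.log_pos (lt_add_of_pos_right 1 hε)) hc)).and (eventually_ge_atTop 1))
  refine ⟨K, fun k hk w hwα _ => ?_⟩
  obtain ⟨hsum, hk1⟩ := hK k hk
  have hWc : ‖w‖ + 1 ≤ ‖w‖ * (1 + 1 / α) := by
    have : 1 ≤ ‖w‖ / α := (one_le_div hα).2 hwα
    rw [mul_add, mul_one_div]; linarith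
  have hS : (1 + 1 / α) * (∑ j ∈ Ico 1 k, r j) / r k ≤ Real.log (1 + ε) := by
    rw [div_le_iff₀ (hrpos k hk1), mul_comm, ← le_div_iff₀ hc]
    rwa [div_mul_eq_mul_div] at hsum
  obtain ⟨hlower, hupper⟩ :=
    norm_prod_one_sub_mul_div_bounds (a := a) hrpos ha hk1 (hα.trans_le hwα) hWc
  have hQ := (mul_nonneg_iff_of_pos_left (Real.exp_pos _)).1 ((norm_nonneg _).trans hupper)
  rw [Icc_sub_one_right_eq_Ico_of_not_isMin (by simp; omega)]
  constructor
  · refine le_trans (mul_le_mul_of_nonneg_right ?_ hQ) hlower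
    linarith [Real.log_le_sub_one_of_pos hε']
  · refine hupper.trans (mul_le_mul_of_nonneg_right ?_ hQ)
    rw [← Real.exp_log hε']
    exact Real.exp_le_exp.2 hS

/-- uniform asymptotics for the partial products
`∏_{j=1}^{k-1} (1 - w a_k / a_j)` on annuli `α ≤ |w| ≤ β`. -/
theorem stmt_1 (N : ℕ) (C : ℂ) (hC : C ≠ 0)
    (P r : ℕ → ℝ)
    (hP : ∀ k, 1 ≤ k → 0 < P k)
    (hPlim : Tendsto (fun k : ℕ => (P k) ^ ((1 : ℝ) / k)) atTop (nhds 1))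
    (hrpos : ∀ k, 1 ≤ k → 0 < r k)
    (hr2 : ∀ᶠ k in atTop, 2 * r k ≤ r (k + 1))
    (hrec : ∀ k, 1 ≤ k →
      r (k + 1) = P k * (r k) ^ N * ∏ j ∈ Finset.Icc 1 k, (1 + r k / r j))
    (a : ℕ → ℂ) (ha : ∀ k, 1 ≤ k → ‖a k‖ = r k) :
    ∀ α β : ℝ, 0 < α → α < β → ∀ ε : ℝ, 0 < ε → ∃ K : ℕ, ∀ k, K ≤ k →
      ∀ w : ℂ, α ≤ ‖w‖ → ‖w‖ ≤ β →
        (1 - ε) * ((‖w‖) ^ (k - 1) * ∏ j ∈ Finset.Icc 1 (k - 1), (1 + r k / r j)) ≤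
            ‖∏ j ∈ Finset.Icc 1 (k - 1), (1 - w * a k / a j)‖ ∧
          ‖∏ j ∈ Finset.Icc 1 (k - 1), (1 - w * a k / a j)‖ ≤
            (1 + ε) * ((‖w‖) ^ (k - 1) * ∏ j ∈ Finset.Icc 1 (k - 1), (1 + r k / r j)) :=
  stmt_1_general N P r hP hPlim hrpos hr2 hrec a ha
end

section
/- For every ε ∈ (0, 1/2] there exists K such that for all k ≥ K: (i) |f(z)| ≥ 2 r_{k+1} whenever |z| = (1+ε) r_k; (ii) |f(z)| ≤ r_{k+1}/2 whenever |z| = (1−ε) r_k; (iii) |f(z)| ≥ 2 r_k whenever |z| = (1−ε) r_k; (iv) |f(z)| ≤ r_{k+2}/2 whenever |z| = (1+ε) r_k. -/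
/-!
Once the radii double, the factors of `f` with index `j > m` multiply, for `‖z‖ ≤ 3/2 r_m`, to a
number of modulus between `1/128` and `16`, so `‖f z‖` is comparable to
`‖C‖ ‖z‖^N ∏_{j ≤ m} ‖1 - z / a_j‖`, which lies between `∏_{j ≤ m} |‖z‖ / r_j - 1|` and
`∏_{j ≤ m} (1 + ‖z‖ / r_j)`. On a circle `‖z‖ = θ r_m` each of these factors is compared with the
factor `1 + r_m / r_j` of `r_{m+1} = P_m r_m^N ∏_{j ≤ m} (1 + r_m / r_j)`: for `θ < 1` it is at
most `(1 + θ) / 2` times that factor; for `θ = 1 + ε` it is at least `1 + ε / 2` times it for all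
but boundedly many `j`; and since `r_{m+1} / r_m → ∞`, on `‖z‖ = (1 - ε) r_{m+1}` it is at least
`15 / 2` times it. These exponential gains and losses beat the subexponential factor `P_m`.
-/

open Filter Finset Topology

lemma eventually_mul_pow_le_mul_pow {b c A B : ℝ} (hb : 0 ≤ b) (hbc : b < c) (hA : 0 < A)
    (hB : 0 < B) : ∀ᶠ m : ℕ in atTop, A * b ^ m ≤ B * c ^ m := by
  have hc : 0 < c := hb.trans_lt hbc
  filter_upwards [(isLittleO_pow_pow_of_lt_left hb hbc).def (div_pos hB hA)] with m hm
  rw [Real.norm_of_nonneg (by positivity), Real.norm_of_nonneg (by positivity)] at hm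
  calc A * b ^ m ≤ A * (B / A * c ^ m) := by gcongr
    _ = B * c ^ m := by field_simp

lemma eventually_pow_le_and_le_pow_of_tendsto_root {P : ℕ → ℝ} (hP : ∀ k, 1 ≤ k → 0 < P k)
    (hlim : Tendsto (fun k : ℕ => P k ^ ((1 : ℝ) / k)) atTop (𝓝 1)) {a b : ℝ} (ha : 0 ≤ a)
    (ha1 : a < 1) (hb : 1 < b) : ∀ᶠ k : ℕ in atTop, a ^ k ≤ P k ∧ P k ≤ b ^ k := by
  filter_upwards [hlim.eventually (Icc_mem_nhds ha1 hb), eventually_ge_atTop 1] with k hk hk1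
  have hroot : (P k ^ ((1 : ℝ) / k)) ^ k = P k := by
    rw [← Real.rpow_natCast, ← Real.rpow_mul (hP k hk1).le,
      one_div_mul_cancel (by positivity), Real.rpow_one]
  rw [← hroot]
  exact ⟨pow_le_pow_left₀ ha hk.1 k, pow_le_pow_left₀ (by linarith [hk.1]) hk.2 k⟩

lemma eventually_of_eventually_succ {p : ℕ → Prop} (h : ∀ᶠ k in atTop, p (k + 1)) :
    ∀ᶠ k in atTop, p k := by
  rw [← map_add_atTop_eq_nat 1]
  exact h

section Doubling

variable {r : ℕ → ℝ} {K : ℕ}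

lemma two_pow_sub_mul_le_of_doubling (hK : ∀ k, K ≤ k → 2 * r k ≤ r (k + 1)) {j k : ℕ}
    (hj : K ≤ j) (hjk : j ≤ k) : 2 ^ (k - j) * r j ≤ r k := by
  induction k, hjk using Nat.le_induction with
  | base => simp
  | succ k hjk ih =>
    rw [Nat.sub_add_comm hjk, pow_succ]
    linarith [hK k (hj.trans hjk)]

lemma tendsto_atTop_of_doubling (hK : ∀ k, K ≤ k → 2 * r k ≤ r (k + 1)) (hrK : 0 < r K) :
    Tendsto r atTop atTop := by
  rw [← tendsto_add_atTop_iff_nat K]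
  refine tendsto_atTop_mono (fun i => ?_)
    ((tendsto_pow_atTop_atTop_of_one_lt one_lt_two).atTop_mul_const hrK)
  simpa [add_comm] using two_pow_sub_mul_le_of_doubling hK le_rfl (Nat.le_add_left K i)

lemma exists_card_filter_le_of_doubling (hK : ∀ k, K ≤ k → 2 * r k ≤ r (k + 1))
    (hnn : ∀ k, 1 ≤ k → 0 ≤ r k) (A : ℝ) :
    ∃ B, ∀ k, #{j ∈ Icc 1 k | r k < A * r j} ≤ B := by
  obtain ⟨m₀, hm₀⟩ := pow_unbounded_of_one_lt A one_lt_two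
  refine ⟨K + m₀, fun k => ?_⟩
  have hsub : {j ∈ Icc 1 k | r k < A * r j} ⊆ range K ∪ Ioc (k - m₀) k := by
    intro j hj
    simp only [mem_filter, mem_Icc] at hj
    simp only [mem_union, mem_range, mem_Ioc]
    by_contra! hbad
    have hgap : 2 ^ m₀ ≤ (2 : ℝ) ^ (k - j) := pow_le_pow_right₀ one_le_two (by omega)
    have := two_pow_sub_mul_le_of_doubling hK hbad.1 hj.1.2
    nlinarith [hnn j hj.1.1]
  calc #{j ∈ Icc 1 k | r k < A * r j} ≤ #(range K ∪ Ioc (k - m₀) k) := card_le_card hsub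
    _ ≤ #(range K) + #(Ioc (k - m₀) k) := card_union_le _ _
    _ ≤ K + m₀ := by simp only [card_range, Nat.card_Ioc]; omega

lemma eventually_forall_le_of_doubling (hK : ∀ k, K ≤ k → 2 * r k ≤ r (k + 1))
    (hpos : ∀ k, 1 ≤ k → 0 < r k) : ∀ᶠ k in atTop, ∀ j ∈ Icc 1 k, r j ≤ r k := by
  have hK' : ∀ k, max K 1 ≤ k → 2 * r k ≤ r (k + 1) := fun k hk => hK k (le_of_max_le_left hk)
  have hlim := tendsto_atTop_of_doubling hK' (hpos _ (le_max_right K 1))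
  filter_upwards [hlim.eventually_ge_atTop (∑ j ∈ Icc 1 K, r j), eventually_ge_atTop (max K 1)]
    with k hk hkK j hj
  obtain ⟨hj1, hjk⟩ := mem_Icc.1 hj
  by_cases hjK : j ≤ K
  · exact (single_le_sum (fun i hi => (hpos i (mem_Icc.1 hi).1).le)
      (mem_Icc.2 ⟨hj1, hjK⟩)).trans hk
  · have := two_pow_sub_mul_le_of_doubling hK' (by omega) hjk
    nlinarith [one_le_pow₀ (M₀ := ℝ) one_le_two (n := k - j), hpos j hj1]

end Doubling

/-- For `‖z‖ = s` and `‖a j‖ = r j`,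
`minorant r m s ≤ ∏ j ∈ Icc 1 m, ‖1 - z / a j‖ ≤ majorant r m s`, and the radii satisfy
`r (k + 1) = P k * r k ^ N * majorant r k (r k)`. -/
noncomputable def majorant (r : ℕ → ℝ) (m : ℕ) (s : ℝ) : ℝ := ∏ j ∈ Icc 1 m, (1 + s / r j)

noncomputable def minorant (r : ℕ → ℝ) (m : ℕ) (s : ℝ) : ℝ := ∏ j ∈ Icc 1 m, |s / r j - 1|

section Products

variable {r : ℕ → ℝ} {m : ℕ}

lemma majorant_succ (s : ℝ) : majorant r (m + 1) s = majorant r m s * (1 + s / r (m + 1)) :=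
  prod_Icc_succ_top (by omega) _

lemma minorant_succ (s : ℝ) : minorant r (m + 1) s = minorant r m s * |s / r (m + 1) - 1| :=
  prod_Icc_succ_top (by omega) _

lemma majorant_pos (hpos : ∀ j ∈ Icc 1 m, 0 < r j) {s : ℝ} (hs : 0 ≤ s) :
    0 < majorant r m s :=
  prod_pos fun j hj => by have := hpos j hj; positivity

lemma prod_norm_le_majorant {a : ℕ → ℂ} (ha : ∀ k, 1 ≤ k → ‖a k‖ = r k) (z : ℂ) :
    ∏ j ∈ Icc 1 m, ‖1 - z / a j‖ ≤ majorant r m ‖z‖ := by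
  refine prod_le_prod (fun _ _ => norm_nonneg _) fun j hj => ?_
  rw [← ha j (mem_Icc.1 hj).1, ← norm_div, ← norm_one (α := ℂ)]
  exact norm_sub_le _ _

lemma minorant_le_prod_norm {a : ℕ → ℂ} (ha : ∀ k, 1 ≤ k → ‖a k‖ = r k) (z : ℂ) :
    minorant r m ‖z‖ ≤ ∏ j ∈ Icc 1 m, ‖1 - z / a j‖ := by
  refine prod_le_prod (fun _ _ => abs_nonneg _) fun j hj => ?_
  rw [← ha j (mem_Icc.1 hj).1, ← norm_div, ← norm_one (α := ℂ), norm_sub_rev (1 : ℂ)]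
  exact abs_norm_sub_norm_le _ _

lemma prod_mul_majorant_le (hpos : ∀ j ∈ Icc 1 m, 0 < r j) (hle : ∀ j ∈ Icc 1 m, r j ≤ r m)
    {c g : ℕ → ℝ} (hc : ∀ j, 0 ≤ c j) (h : ∀ j ∈ Icc 1 m, c j * (1 + r m / r j) ≤ g j) :
    (∏ j ∈ Icc 1 m, c j) * majorant r m (r m) ≤ ∏ j ∈ Icc 1 m, g j := by
  rw [majorant, ← prod_mul_distrib]
  refine prod_le_prod (fun j hj => mul_nonneg (hc j) ?_) h
  linarith [(one_le_div (hpos j hj)).2 (hle j hj)]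

lemma prod_Icc_one_const (m : ℕ) (c : ℝ) : ∏ _j ∈ Icc 1 m, c = c ^ m := by
  rw [prod_const, Nat.card_Icc, Nat.add_sub_cancel]

lemma pow_mul_majorant_le_minorant (hpos : ∀ j ∈ Icc 1 m, 0 < r j)
    (hle : ∀ j ∈ Icc 1 m, r j ≤ r m) {c s : ℝ} (hc : 1 ≤ c) (hs : c * r m ≤ s) :
    ((c - 1) / 2) ^ m * majorant r m (r m) ≤ minorant r m s := by
  rw [← prod_Icc_one_const]
  refine prod_mul_majorant_le hpos hle (fun _ => by linarith) fun j hj => ?_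
  have hx := (one_le_div (hpos j hj)).2 (hle j hj)
  have hy : c * (r m / r j) ≤ s / r j := by
    rw [← mul_div_assoc]; exact div_le_div_of_nonneg_right hs (hpos j hj).le
  nlinarith [le_abs_self (s / r j - 1)]

lemma pow_mul_majorant_le (hpos : ∀ j ∈ Icc 1 m, 0 < r j) (hle : ∀ j ∈ Icc 1 m, r j ≤ r m)
    {c s : ℝ} (hc : 1 ≤ c) (hs : c * r m ≤ s) :
    ((1 + c) / 2) ^ m * majorant r m (r m) ≤ majorant r m s := by
  rw [← prod_Icc_one_const]
  refine prod_mul_majorant_le hpos hle (fun _ => by linarith) fun j hj => ?_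
  have hx := (one_le_div (hpos j hj)).2 (hle j hj)
  have hy : c * (r m / r j) ≤ s / r j := by
    rw [← mul_div_assoc]; exact div_le_div_of_nonneg_right hs (hpos j hj).le
  nlinarith

lemma majorant_le_pow_mul (hpos : ∀ j ∈ Icc 1 m, 0 < r j) (hle : ∀ j ∈ Icc 1 m, r j ≤ r m)
    {θ s : ℝ} (hθ : θ ≤ 1) (hs0 : 0 ≤ s) (hs : s ≤ θ * r m) :
    majorant r m s ≤ ((1 + θ) / 2) ^ m * majorant r m (r m) := by
  rw [majorant, majorant, ← prod_Icc_one_const, ← prod_mul_distrib]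
  refine prod_le_prod (fun j hj => by have := hpos j hj; positivity) fun j hj => ?_
  have hx := (one_le_div (hpos j hj)).2 (hle j hj)
  have hy : s / r j ≤ θ * (r m / r j) := by
    rw [← mul_div_assoc]; exact div_le_div_of_nonneg_right hs (hpos j hj).le
  nlinarith

end Products

section InfiniteProduct

lemma norm_tprod_one_add_sub_one_le {ι R : Type*} [NormedCommRing R] [NormOneClass R]
    [CompleteSpace R] {f : ι → R} (hf : Summable fun i => ‖f i‖) :
    ‖∏' i, (1 + f i) - 1‖ ≤ Real.exp (∑' i, ‖f i‖) - 1 :=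
  le_of_tendsto ((multipliable_one_add_of_summable hf).hasProd.sub_const 1).norm
    (Eventually.of_forall fun s => (s.norm_prod_one_add_sub_one_le f).trans
      (by gcongr; exact hf.sum_le_tsum s fun i _ => norm_nonneg _))

lemma norm_tprod_one_add_mem_Icc {ι R : Type*} [NormedCommRing R] [NormOneClass R]
    [CompleteSpace R] {f : ι → R} (hf : Summable fun i => ‖f i‖) (h : ∑' i, ‖f i‖ ≤ 1 / 4) :
    ‖∏' i, (1 + f i)‖ ∈ Set.Icc (1 / 2) (3 / 2) := by
  have hexp : Real.exp (∑' i, ‖f i‖) ≤ 4 / 3 :=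
    (Real.exp_le_exp.2 h).trans <| (Real.exp_bound_div_one_sub_of_interval (by norm_num)
      (by norm_num)).trans (by norm_num)
  have h1 := norm_tprod_one_add_sub_one_le hf
  have h2 := norm_sub_norm_le (∏' i, (1 + f i)) 1
  have h3 := norm_sub_norm_le 1 (∏' i, (1 + f i))
  rw [norm_sub_rev] at h3
  simp only [norm_one] at h2 h3
  exact ⟨by linarith, by linarith⟩

end InfiniteProduct

section CanonicalProduct

variable {a : ℕ → ℂ} {r : ℕ → ℝ}

lemma prod_range_add_one_eq_prod_Icc (g : ℕ → ℝ) (m : ℕ) :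
    ∏ k ∈ range m, g (k + 1) = ∏ j ∈ Icc 1 m, g j := by
  rw [range_eq_Ico, prod_Ico_add', ← Ico_add_one_right_eq_Icc, zero_add]

lemma norm_div_le_of_doubling (ha : ∀ k, 1 ≤ k → ‖a k‖ = r k) {m : ℕ}
    (hdbl : ∀ k, m ≤ k → 2 * r k ≤ r (k + 1)) {z : ℂ} (hz : ‖z‖ ≤ 3 / 2 * r m) (i : ℕ) :
    ‖z / a (m + 1 + i)‖ ≤ 3 / 4 * (1 / 2) ^ i := by
  have hr := two_pow_sub_mul_le_of_doubling hdbl le_rfl (show m ≤ m + 1 + i by omega)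
  rw [show m + 1 + i - m = i + 1 by omega] at hr
  rw [norm_div, ha _ (by omega)]
  refine div_le_of_le_mul₀ (by rw [← ha _ (by omega)]; positivity) (by positivity) ?_
  calc ‖z‖ ≤ 3 / 2 * r m := hz
    _ = 3 / 4 * (1 / 2) ^ i * (2 ^ (i + 1) * r m) := by
      rw [pow_succ, div_pow, one_pow]; field_simp; ring
    _ ≤ 3 / 4 * (1 / 2) ^ i * r (m + 1 + i) := by gcongr

/-- The factors of index `> m + 3` contribute a factor in `[1/2, 3/2]` and the three factors
of indices `m + 1, m + 2, m + 3` one in `[(1/4)^3, (7/4)^3]`. -/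
lemma norm_tprod_one_sub_div_bounds (ha : ∀ k, 1 ≤ k → ‖a k‖ = r k) {m : ℕ}
    (hdbl : ∀ k, m ≤ k → 2 * r k ≤ r (k + 1)) {z : ℂ} (hz : ‖z‖ ≤ 3 / 2 * r m) :
    (∏ j ∈ Icc 1 m, ‖1 - z / a j‖) / 128 ≤ ‖∏' k, (1 - z / a (k + 1))‖ ∧
      ‖∏' k, (1 - z / a (k + 1))‖ ≤ 16 * ∏ j ∈ Icc 1 m, ‖1 - z / a j‖ := by
  have hsmall := norm_div_le_of_doubling ha hdbl hz
  set g : ℕ → ℂ := fun k => 1 - z / a (k + 1)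
  set f : ℕ → ℂ := fun i => -(z / a (i + (m + 3) + 1))
  have hf_le : ∀ i, ‖f i‖ ≤ (1 / 2) ^ i / 8 := fun i => by
    have := hsmall (i + 3)
    rw [show m + 1 + (i + 3) = i + (m + 3) + 1 by omega, pow_add] at this
    simp only [f, norm_neg]
    linarith [pow_nonneg (by norm_num : (0 : ℝ) ≤ 1 / 2) i]
  have hf_sum : Summable fun i => ‖f i‖ :=
    .of_nonneg_of_le (fun _ => norm_nonneg _) hf_le (summable_geometric_two.div_const 8)
  have hf_tsum : ∑' i, ‖f i‖ ≤ 1 / 4 :=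
    (hf_sum.tsum_le_tsum hf_le (summable_geometric_two.div_const 8)).trans
      (by rw [tsum_div_const, tsum_geometric_two]; norm_num)
  obtain ⟨htail_lo, htail_hi⟩ := norm_tprod_one_add_mem_Icc hf_sum hf_tsum
  have htail : (fun i => g (i + (m + 3))) = fun i => 1 + f i := by
    funext i; simp only [g, f, sub_eq_add_neg]
  have hsplit : ‖∏' k, g k‖ =
      (∏ j ∈ Icc 1 m, ‖1 - z / a j‖) * (∏ i ∈ range 3, ‖g (m + i)‖) * ‖∏' i, (1 + f i)‖ := by
    rw [← Multipliable.prod_mul_tprod_nat_mul' (k := m + 3)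
      (by rw [htail]; exact multipliable_one_add_of_summable hf_sum), htail, norm_mul,
      norm_prod, prod_range_add, prod_range_add_one_eq_prod_Icc (fun j => ‖1 - z / a j‖)]
  have hmid_mem : ∀ i ∈ range 3, 1 / 4 ≤ ‖g (m + i)‖ ∧ ‖g (m + i)‖ ≤ 7 / 4 := by
    intro i hi
    have hw : ‖z / a (m + 1 + i)‖ ≤ 3 / 4 :=
      (hsmall i).trans (mul_le_of_le_one_right (by norm_num) (pow_le_one₀ (by norm_num)
        (by norm_num)))
    have h1 := norm_sub_norm_le (1 : ℂ) (z / a (m + 1 + i))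
    have h2 := norm_sub_le (1 : ℂ) (z / a (m + 1 + i))
    simp only [g, show m + i + 1 = m + 1 + i by omega]
    rw [norm_one] at h1 h2
    constructor <;> linarith
  have hmid_lo : ∏ _i ∈ range 3, (1 / 4 : ℝ) ≤ ∏ i ∈ range 3, ‖g (m + i)‖ :=
    prod_le_prod (fun _ _ => by norm_num) fun i hi => (hmid_mem i hi).1
  have hmid_hi : ∏ i ∈ range 3, ‖g (m + i)‖ ≤ ∏ _i ∈ range 3, (7 / 4 : ℝ) :=
    prod_le_prod (fun _ _ => norm_nonneg _) fun i hi => (hmid_mem i hi).2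
  rw [prod_const, card_range] at hmid_lo hmid_hi
  have hhead : 0 ≤ ∏ j ∈ Icc 1 m, ‖1 - z / a j‖ := prod_nonneg fun _ _ => norm_nonneg _
  rw [hsplit]
  constructor
  · calc (∏ j ∈ Icc 1 m, ‖1 - z / a j‖) / 128
          = (∏ j ∈ Icc 1 m, ‖1 - z / a j‖) * (1 / 4) ^ 3 * (1 / 2) := by ring
      _ ≤ _ := by gcongr
  · calc _ ≤ (∏ j ∈ Icc 1 m, ‖1 - z / a j‖) * (7 / 4) ^ 3 * (3 / 2) := by gcongr
      _ ≤ 16 * ∏ j ∈ Icc 1 m, ‖1 - z / a j‖ := by nlinarith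

end CanonicalProduct

lemma eventually_norm_bounds_of_eq_tprod {N : ℕ} {C : ℂ} {a : ℕ → ℂ} {r : ℕ → ℝ}
    {f : ℂ → ℂ} (hdbl : ∀ᶠ k in atTop, 2 * r k ≤ r (k + 1)) (ha : ∀ k, 1 ≤ k → ‖a k‖ = r k)
    (hf : ∀ z : ℂ, f z = C * z ^ N * ∏' k : ℕ, (1 - z / a (k + 1))) :
    ∀ᶠ m in atTop, ∀ z : ℂ, ‖z‖ ≤ 3 / 2 * r m →
      ‖C‖ * ‖z‖ ^ N * minorant r m ‖z‖ / 128 ≤ ‖f z‖ ∧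
        ‖f z‖ ≤ 16 * ‖C‖ * ‖z‖ ^ N * majorant r m ‖z‖ := by
  obtain ⟨K, hK⟩ := eventually_atTop.1 hdbl
  filter_upwards [eventually_ge_atTop K] with m hm z hz
  obtain ⟨hlo, hhi⟩ := norm_tprod_one_sub_div_bounds ha (fun k hk => hK k (hm.trans hk)) hz
  have hmin := minorant_le_prod_norm (m := m) ha z
  have hmaj := prod_norm_le_majorant (m := m) ha z
  rw [hf, norm_mul, norm_mul, norm_pow]
  constructor
  · calc ‖C‖ * ‖z‖ ^ N * minorant r m ‖z‖ / 128
        ≤ ‖C‖ * ‖z‖ ^ N * ((∏ j ∈ Icc 1 m, ‖1 - z / a j‖) / 128) := by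
          rw [mul_div_assoc]; gcongr
      _ ≤ _ := by gcongr
  · calc _ ≤ ‖C‖ * ‖z‖ ^ N * (16 * ∏ j ∈ Icc 1 m, ‖1 - z / a j‖) := by gcongr
      _ ≤ ‖C‖ * ‖z‖ ^ N * (16 * majorant r m ‖z‖) := by gcongr
      _ = _ := by ring

structure IsRadiusSequence (N : ℕ) (P r : ℕ → ℝ) : Prop where
  P_pos : ∀ k, 1 ≤ k → 0 < P k
  tendsto_P_root : Tendsto (fun k : ℕ => P k ^ ((1 : ℝ) / k)) atTop (𝓝 1)
  r_pos : ∀ k, 1 ≤ k → 0 < r k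
  doubling : ∀ᶠ k in atTop, 2 * r k ≤ r (k + 1)
  succ_eq : ∀ k, 1 ≤ k → r (k + 1) = P k * r k ^ N * majorant r k (r k)

namespace IsRadiusSequence

variable {N : ℕ} {P r : ℕ → ℝ}

lemma r_pos_of_mem_Icc (h : IsRadiusSequence N P r) {m : ℕ} : ∀ j ∈ Icc 1 m, 0 < r j :=
  fun j hj => h.r_pos j (mem_Icc.1 hj).1

lemma eventually_pow_le_and_le_pow (h : IsRadiusSequence N P r) {a b : ℝ} (ha : 0 ≤ a)
    (ha1 : a < 1) (hb : 1 < b) : ∀ᶠ k : ℕ in atTop, a ^ k ≤ P k ∧ P k ≤ b ^ k :=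
  eventually_pow_le_and_le_pow_of_tendsto_root h.P_pos h.tendsto_P_root ha ha1 hb

lemma eventually_forall_le (h : IsRadiusSequence N P r) :
    ∀ᶠ k in atTop, ∀ j ∈ Icc 1 k, r j ≤ r k :=
  let ⟨_, hK⟩ := eventually_atTop.1 h.doubling
  eventually_forall_le_of_doubling hK h.r_pos

lemma eventually_mul_le_succ (h : IsRadiusSequence N P r) {A : ℝ} (hA : 0 < A) :
    ∀ᶠ k in atTop, A * r k ≤ r (k + 1) := by
  refine eventually_of_eventually_succ ?_
  filter_upwards [h.eventually_pow_le_and_le_pow (a := 9 / 10) (b := 11 / 10) (by norm_num)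
      (by norm_num) (by norm_num),
    (tendsto_add_atTop_nat 1).eventually (h.eventually_pow_le_and_le_pow (a := 9 / 10)
      (b := 11 / 10) (by norm_num) (by norm_num) (by norm_num)),
    h.eventually_forall_le, h.doubling,
    eventually_mul_pow_le_mul_pow (b := 11 / 10) (c := 27 / 20) (by norm_num) (by norm_num) hA
      (by norm_num : (0 : ℝ) < 9 / 5),
    eventually_ge_atTop 1] with k hPk hPk1 hle hdbl hratio hk
  have hpos := h.r_pos_of_mem_Icc (m := k)
  have hrk := h.r_pos k hk
  have hmaj := majorant_pos hpos hrk.le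
  have hQ : 2 * (3 / 2) ^ k * majorant r k (r k) ≤ majorant r (k + 1) (r (k + 1)) := by
    have := pow_mul_majorant_le hpos hle (c := 2) (by norm_num) hdbl
    rw [majorant_succ, div_self (h.r_pos _ (by omega)).ne']
    norm_num at this ⊢
    linarith
  calc A * r (k + 1) = A * P k * (r k ^ N * majorant r k (r k)) := by
        rw [h.succ_eq k hk]; ring
    _ ≤ A * (11 / 10) ^ k * (r k ^ N * majorant r k (r k)) := by gcongr; exact hPk.2
    _ ≤ 9 / 5 * (27 / 20) ^ k * (r k ^ N * majorant r k (r k)) := by gcongr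
    _ = (9 / 10) ^ (k + 1) * r k ^ N * (2 * (3 / 2) ^ k * majorant r k (r k)) := by
        rw [show (27 / 20 : ℝ) = 9 / 10 * (3 / 2) by norm_num, mul_pow]; ring
    _ ≤ P (k + 1) * r (k + 1) ^ N * majorant r (k + 1) (r (k + 1)) := by
        have hr1 : r k ≤ r (k + 1) := by linarith
        have hP1 : 0 ≤ P (k + 1) := (h.P_pos _ (by omega)).le
        have hPr : 0 ≤ P (k + 1) * r (k + 1) ^ N := mul_nonneg hP1 (pow_nonneg (by linarith) _)
        gcongr
        exact hPk1.1
    _ = r (k + 1 + 1) := (h.succ_eq (k + 1) (by omega)).symm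

lemma eventually_majorant_le (h : IsRadiusSequence N P r) {c θ : ℝ} (hc : 0 < c) (hθ0 : 0 ≤ θ)
    (hθ : θ < 1) : ∀ᶠ k in atTop, ∀ s, 0 ≤ s → s ≤ θ * r k →
      16 * c * s ^ N * majorant r k s ≤ r (k + 1) / 2 := by
  filter_upwards [h.eventually_pow_le_and_le_pow (a := (3 + θ) / 4) (b := 2) (by linarith)
      (by linarith) one_lt_two, h.eventually_forall_le,
    eventually_mul_pow_le_mul_pow (b := (1 + θ) / 2) (c := (3 + θ) / 4) (by linarith)
      (by linarith) (by positivity : 0 < 32 * c) one_pos,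
    eventually_ge_atTop 1] with k hPk hle hratio hk s hs0 hs
  have hpos := h.r_pos_of_mem_Icc (m := k)
  have hrk := h.r_pos k hk
  have hmaj := majorant_pos hpos hrk.le
  have hsr : s ≤ r k := hs.trans (by nlinarith)
  have hmaj_s := (majorant_pos hpos hs0).le
  calc 16 * c * s ^ N * majorant r k s
      ≤ 16 * c * r k ^ N * (((1 + θ) / 2) ^ k * majorant r k (r k)) := by
        gcongr; exact majorant_le_pow_mul hpos hle hθ.le hs0 hs
    _ = 32 * c * ((1 + θ) / 2) ^ k * (r k ^ N * majorant r k (r k)) / 2 := by ring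
    _ ≤ 1 * ((3 + θ) / 4) ^ k * (r k ^ N * majorant r k (r k)) / 2 := by gcongr
    _ ≤ P k * (r k ^ N * majorant r k (r k)) / 2 := by gcongr; linarith [hPk.1]
    _ = r (k + 1) / 2 := by rw [h.succ_eq k hk]; ring

/-- Factors with `r k < 5 / ε * r j` are bounded below by `ε / 2 * (1 + r k / r j)`, the others
by `(1 + ε / 2) * (1 + r k / r j)`; there are boundedly many of the former. -/
lemma eventually_two_mul_succ_le_minorant (h : IsRadiusSequence N P r) {c ε : ℝ} (hc : 0 < c)
    (hε : 0 < ε) (hε2 : ε ≤ 1 / 2) : ∀ᶠ k in atTop,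
      2 * r (k + 1) ≤ c * ((1 + ε) * r k) ^ N * minorant r k ((1 + ε) * r k) / 128 := by
  obtain ⟨K, hK⟩ := eventually_atTop.1 h.doubling
  obtain ⟨B, hB⟩ := exists_card_filter_le_of_doubling hK (fun k hk => (h.r_pos k hk).le) (5 / ε)
  set q := ε / 2 / (1 + ε / 2) with hq
  have hq0 : 0 < q := by positivity
  have hq1 : q ≤ 1 := (div_le_one (by positivity)).2 (by linarith)
  filter_upwards [h.eventually_pow_le_and_le_pow (a := 0) (b := 1 + ε / 4) le_rfl one_pos
      (by linarith), h.eventually_forall_le,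
    eventually_mul_pow_le_mul_pow (b := 1 + ε / 4) (c := 1 + ε / 2) (by positivity)
      (by linarith) (by norm_num : (0 : ℝ) < 256) (by positivity : 0 < c * q ^ B),
    eventually_ge_atTop 1] with k hPk hle hratio hk
  have hpos := h.r_pos_of_mem_Icc (m := k)
  have hrk := h.r_pos k hk
  have hmaj := majorant_pos hpos hrk.le
  have hcoef : (1 + ε / 2) ^ k * q ^ B ≤
      ∏ j ∈ Icc 1 k, (1 + ε / 2) * (if r k < 5 / ε * r j then q else 1) := by
    rw [prod_mul_distrib, prod_Icc_one_const, ← prod_filter, prod_const]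
    exact mul_le_mul_of_nonneg_left (pow_le_pow_of_le_one hq0.le hq1 (hB k)) (by positivity)
  have hmin : (1 + ε / 2) ^ k * q ^ B * majorant r k (r k) ≤ minorant r k ((1 + ε) * r k) := by
    refine (mul_le_mul_of_nonneg_right hcoef hmaj.le).trans
      (prod_mul_majorant_le hpos hle (fun j => by split_ifs <;> positivity) fun j hj => ?_)
    have hx := (one_le_div (hpos j hj)).2 (hle j hj)
    rw [mul_div_assoc]
    refine le_trans ?_ (le_abs_self _)
    split_ifs with hbad
    · rw [hq, mul_div_cancel₀ _ (by positivity)]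
      nlinarith
    · have hgood : 5 / ε ≤ r k / r j := (le_div_iff₀ (hpos j hj)).2 (not_lt.1 hbad)
      rw [div_le_iff₀' hε] at hgood
      nlinarith
  calc 2 * r (k + 1) = 256 * P k * (r k ^ N * majorant r k (r k)) / 128 := by
        rw [h.succ_eq k hk]; ring
    _ ≤ 256 * (1 + ε / 4) ^ k * (r k ^ N * majorant r k (r k)) / 128 := by gcongr; exact hPk.2
    _ ≤ c * q ^ B * (1 + ε / 2) ^ k * (r k ^ N * majorant r k (r k)) / 128 := by gcongr
    _ = c * r k ^ N * ((1 + ε / 2) ^ k * q ^ B * majorant r k (r k)) / 128 := by ring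
    _ ≤ c * ((1 + ε) * r k) ^ N * minorant r k ((1 + ε) * r k) / 128 := by
        gcongr; nlinarith

lemma eventually_two_mul_le_minorant (h : IsRadiusSequence N P r) {c ε : ℝ} (hc : 0 < c)
    (hε : 0 < ε) (hε2 : ε ≤ 1 / 2) : ∀ᶠ k in atTop,
      2 * r k ≤ c * ((1 - ε) * r k) ^ N * minorant r k ((1 - ε) * r k) / 128 := by
  refine eventually_of_eventually_succ ?_
  filter_upwards [h.eventually_mul_le_succ (by norm_num : (0 : ℝ) < 32),
    h.eventually_pow_le_and_le_pow (a := 0) (b := 2) le_rfl one_pos one_lt_two,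
    h.eventually_forall_le,
    eventually_mul_pow_le_mul_pow (b := 2) (c := 15 / 2) (by norm_num) (by norm_num)
      (by norm_num : (0 : ℝ) < 256) (by positivity : 0 < c * ε),
    eventually_ge_atTop 1] with k hgrowth hPk hle hratio hk
  have hpos := h.r_pos_of_mem_Icc (m := k)
  have hrk := h.r_pos k hk
  have hrk1 := h.r_pos (k + 1) (by omega)
  have hmaj := majorant_pos hpos hrk.le
  set s := (1 - ε) * r (k + 1)
  have hs : 16 * r k ≤ s := by nlinarith
  have hmin : ε * ((15 / 2) ^ k * majorant r k (r k)) ≤ minorant r (k + 1) s := by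
    rw [minorant_succ, show s / r (k + 1) - 1 = -ε by field_simp; ring, abs_neg,
      abs_of_pos hε, mul_comm]
    have := pow_mul_majorant_le_minorant hpos hle (c := 16) (by norm_num) hs
    norm_num at this
    gcongr
  calc 2 * r (k + 1) = 256 * P k * (r k ^ N * majorant r k (r k)) / 128 := by
        rw [h.succ_eq k hk]; ring
    _ ≤ 256 * 2 ^ k * (r k ^ N * majorant r k (r k)) / 128 := by gcongr; exact hPk.2
    _ ≤ c * ε * (15 / 2) ^ k * (r k ^ N * majorant r k (r k)) / 128 := by gcongr
    _ = c * r k ^ N * (ε * ((15 / 2) ^ k * majorant r k (r k))) / 128 := by ring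
    _ ≤ c * s ^ N * minorant r (k + 1) s / 128 := by
        have hs0 : 0 ≤ s := by linarith
        gcongr
        linarith

end IsRadiusSequence

theorem stmt_4_general (N : ℕ) (C : ℂ) (hC : C ≠ 0)
    (P r : ℕ → ℝ)
    (hP : ∀ k, 1 ≤ k → 0 < P k)
    (hPlim : Tendsto (fun k : ℕ => (P k) ^ ((1 : ℝ) / k)) atTop (nhds 1))
    (hrpos : ∀ k, 1 ≤ k → 0 < r k)
    (hr2 : ∀ᶠ k in atTop, 2 * r k ≤ r (k + 1))
    (hrec : ∀ k, 1 ≤ k →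
      r (k + 1) = P k * (r k) ^ N * ∏ j ∈ Finset.Icc 1 k, (1 + r k / r j))
    (a : ℕ → ℂ) (ha : ∀ k, 1 ≤ k → ‖a k‖ = r k)
    (f : ℂ → ℂ)
    (hf : ∀ z : ℂ, f z = C * z ^ N * ∏' k : ℕ, (1 - z / a (k + 1))) :
    ∀ ε : ℝ, 0 < ε → ε ≤ 1 / 2 → ∃ K : ℕ, ∀ k, K ≤ k →
      (∀ z : ℂ, ‖z‖ = (1 + ε) * r k → 2 * r (k + 1) ≤ ‖f z‖) ∧
      (∀ z : ℂ, ‖z‖ = (1 - ε) * r k → ‖f z‖ ≤ r (k + 1) / 2) ∧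
      (∀ z : ℂ, ‖z‖ = (1 - ε) * r k → 2 * r k ≤ ‖f z‖) ∧
      (∀ z : ℂ, ‖z‖ = (1 + ε) * r k → ‖f z‖ ≤ r (k + 2) / 2) := by
  intro ε hε hε2
  have h : IsRadiusSequence N P r := ⟨hP, hPlim, hrpos, hr2, hrec⟩
  have hc : 0 < ‖C‖ := norm_pos_iff.2 hC
  have hmod := eventually_norm_bounds_of_eq_tprod hr2 ha hf
  refine eventually_atTop.1 ?_
  filter_upwards [hmod, (tendsto_add_atTop_nat 1).eventually hmod,
    h.eventually_two_mul_succ_le_minorant hc hε hε2,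
    h.eventually_majorant_le hc (θ := 1 - ε) (by linarith) (by linarith),
    h.eventually_two_mul_le_minorant hc hε hε2,
    (tendsto_add_atTop_nat 1).eventually
      (h.eventually_majorant_le hc (θ := 3 / 4) (by norm_num) (by norm_num)),
    hr2, eventually_ge_atTop 1] with k hk hk1 hi hii hiii hiv hdbl hk0
  have hrk := h.r_pos k hk0
  refine ⟨fun z hz => ?_, fun z hz => ?_, fun z hz => ?_, fun z hz => ?_⟩
  · have := (hk z (by rw [hz]; nlinarith)).1
    rw [hz] at this
    exact hi.trans this
  · exact (hk z (by rw [hz]; nlinarith)).2.trans (hii _ (norm_nonneg z) hz.le)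
  · have := (hk z (by rw [hz]; nlinarith)).1
    rw [hz] at this
    exact hiii.trans this
  · have hz' : ‖z‖ ≤ 3 / 4 * r (k + 1) := by rw [hz]; nlinarith
    exact (hk1 z (by linarith)).2.trans (hiv _ (norm_nonneg z) hz')

/-- the four modulus estimates (p4e)-(p4h) for `f` on circles
`|z| = (1 ± ε) r_k`, for every `ε ∈ (0, 1/2]` and all large `k`. -/
theorem stmt_4 (N : ℕ) (C : ℂ) (hC : C ≠ 0)
    (P r : ℕ → ℝ)
    (hP : ∀ k, 1 ≤ k → 0 < P k)
    (hPlim : Tendsto (fun k : ℕ => (P k) ^ ((1 : ℝ) / k)) atTop (nhds 1))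
    (hrpos : ∀ k, 1 ≤ k → 0 < r k)
    (hr2 : ∀ᶠ k in atTop, 2 * r k ≤ r (k + 1))
    (hrec : ∀ k, 1 ≤ k →
      r (k + 1) = P k * (r k) ^ N * ∏ j ∈ Finset.Icc 1 k, (1 + r k / r j))
    (a : ℕ → ℂ) (ha : ∀ k, 1 ≤ k → ‖a k‖ = r k)
    (f : ℂ → ℂ)
    (hmul : ∀ z : ℂ, Multipliable (fun k : ℕ => 1 - z / a (k + 1)))
    (hf : ∀ z : ℂ, f z = C * z ^ N * ∏' k : ℕ, (1 - z / a (k + 1))) :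
    ∀ ε : ℝ, 0 < ε → ε ≤ 1 / 2 → ∃ K : ℕ, ∀ k, K ≤ k →
      (∀ z : ℂ, ‖z‖ = (1 + ε) * r k → 2 * r (k + 1) ≤ ‖f z‖) ∧
      (∀ z : ℂ, ‖z‖ = (1 - ε) * r k → ‖f z‖ ≤ r (k + 1) / 2) ∧
      (∀ z : ℂ, ‖z‖ = (1 - ε) * r k → 2 * r k ≤ ‖f z‖) ∧
      (∀ z : ℂ, ‖z‖ = (1 + ε) * r k → ‖f z‖ ≤ r (k + 2) / 2) :=
  stmt_4_general N C hC P r hP hPlim hrpos hr2 hrec a ha f hf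
end
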